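/- arXiv:1608.07301 — 2 statements merged into one kernel-verified Lean document; each statement's English description precedes it below -/
import Mathlib

section
/- Let x be an unpredictable point and let Θ_x denote the closure of the trajectory of x. Then the dynamics on Θ_x is sensitive: there exists ε̃₀ > 0 such that for each point x₁ ∈ Θ_x and each δ > 0, there exist x₂ ∈ Θ_x and t̄ ∈ T₊ with d(x₁, x₂) < δ and d(π(t̄, x₁), π(t̄, x₂)) ≥ ε̃₀. -/
open Filter Topology

/-- The dynamics on the trajectory closure of an unpredictable point
is sensitive. -/
theorem unpredictable_implies_sensitivity
    {X : Type*} [MetricSpace X] (π : ℝ → X → X) (x : X)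
    (hπ0 : ∀ y : X, π 0 y = y)
    (hπcomp : ∀ t₁ t₂ : ℝ, 0 ≤ t₁ → 0 ≤ t₂ → ∀ y : X, π t₁ (π t₂ y) = π (t₁ + t₂) y)
    (hπcont : Continuous fun p : ℝ × X => π p.1 p.2)
    (hinv : ∀ t : ℝ, 0 ≤ t → ∀ y ∈ closure {y : X | ∃ s : ℝ, 0 ≤ s ∧ y = π s x},
      π t y ∈ closure {y : X | ∃ s : ℝ, 0 ≤ s ∧ y = π s x})
    (hunp : ∃ ε₀ > 0, ∃ t τ : ℕ → ℝ,
      (∀ n, 0 ≤ t n) ∧ (∀ n, 0 ≤ τ n) ∧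
      Tendsto t atTop atTop ∧ Tendsto τ atTop atTop ∧
      Tendsto (fun n => π (t n) x) atTop (𝓝 x) ∧
      ∀ n, ε₀ ≤ dist (π (t n + τ n) x) (π (τ n) x)) :
    ∃ ε > 0, ∀ x₁ ∈ closure {y : X | ∃ s : ℝ, 0 ≤ s ∧ y = π s x}, ∀ δ > 0,
      ∃ x₂ ∈ closure {y : X | ∃ s : ℝ, 0 ≤ s ∧ y = π s x}, ∃ tb : ℝ, 0 ≤ tb ∧
        dist x₁ x₂ < δ ∧ ε ≤ dist (π tb x₁) (π tb x₂) := by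
  obtain ⟨ε₀, hε₀, t, τ, ht0, hτ0, httop, hτtop, htend, hsep⟩ := hunp
  refine ⟨ε₀ / 2, by linarith, ?_⟩
  intro x₁ hx₁ δ hδ
  -- pick a trajectory point close to x₁
  obtain ⟨y, hy, hdy⟩ := Metric.mem_closure_iff.mp hx₁ (δ / 2) (by linarith)
  obtain ⟨s, hs, rfl⟩ := hy
  have hcont_s : Continuous fun z : X => π s z :=
    hπcont.comp (continuous_const.prodMk continuous_id)
  have htend_s : Tendsto (fun n => π s (π (t n) x)) atTop (𝓝 (π s x)) :=
    (hcont_s.continuousAt.tendsto).comp htend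
  have h1 : ∀ᶠ n in atTop, dist (π s (π (t n) x)) (π s x) < δ / 2 :=
    (Metric.tendsto_nhds.mp htend_s) (δ / 2) (by linarith)
  have h2 : ∀ᶠ n in atTop, s ≤ τ n := hτtop.eventually_ge_atTop s
  obtain ⟨n, hn1, hn2⟩ := (h1.and h2).exists
  set tb := τ n - s with htb
  have htb0 : 0 ≤ tb := by simp [htb]; linarith
  have key1 : π tb (π s x) = π (τ n) x := by
    rw [hπcomp tb s htb0 hs]; congr 1; ring
  have key2 : π tb (π s (π (t n) x)) = π (t n + τ n) x := by
    rw [hπcomp s (t n) hs (ht0 n), hπcomp tb (s + t n) htb0 (by linarith [hs, ht0 n])]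
    congr 1; ring
  have hmem1 : π s x ∈ closure {y : X | ∃ s : ℝ, 0 ≤ s ∧ y = π s x} :=
    subset_closure ⟨s, hs, rfl⟩
  have hmem2 : π s (π (t n) x) ∈ closure {y : X | ∃ s : ℝ, 0 ≤ s ∧ y = π s x} := by
    rw [hπcomp s (t n) hs (ht0 n)]
    exact subset_closure ⟨s + t n, by linarith [hs, ht0 n], rfl⟩
  have hsepn : ε₀ ≤ dist (π tb (π s (π (t n) x))) (π tb (π s x)) := by
    rw [key1, key2]; exact hsep n
  have htri : ε₀ ≤ dist (π tb x₁) (π tb (π s x)) + dist (π tb x₁) (π tb (π s (π (t n) x))) := by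
    calc ε₀ ≤ dist (π tb (π s (π (t n) x))) (π tb (π s x)) := hsepn
    _ ≤ dist (π tb (π s (π (t n) x))) (π tb x₁) + dist (π tb x₁) (π tb (π s x)) :=
        dist_triangle _ _ _
    _ = _ := by rw [dist_comm (π tb (π s (π (t n) x)))]; ring
  rcases le_or_gt (ε₀ / 2) (dist (π tb x₁) (π tb (π s x))) with hc | hc
  · exact ⟨π s x, hmem1, tb, htb0, by linarith, hc⟩
  · refine ⟨π s (π (t n) x), hmem2, tb, htb0, ?_, by linarith⟩
    calc dist x₁ (π s (π (t n) x))
        ≤ dist x₁ (π s x) + dist (π s x) (π s (π (t n) x)) := dist_triangle _ _ _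
      _ < δ / 2 + δ / 2 := by rw [dist_comm (π s x)]; linarith
      _ = δ := by ring
end

section
/- For each increasing sequence {m_n} of positive integers, there exists a sequence s** ∈ Σ₂ and sequences {α_n}, {β_n} of positive integers, both diverging to infinity, such that d(σ^{α_n + r}(s**), σ^r(s**)) ≤ 2^{-m_n} for r = 0, 1, …, n and d(σ^{α_n + β_n}(s**), σ^{β_n}(s**)) ≥ 1 for each n ∈ ℕ. -/
open Filter Topology

noncomputable def dSigma (s t : ℕ → Fin 2) : ℝ :=
  ∑' k : ℕ, |((s k : ℝ)) - ((t k : ℝ))| / 2 ^ k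

def shift (s : ℕ → Fin 2) : ℕ → Fin 2 := fun k => s (k + 1)

open Fin.NatCast

/-!
Take for `s` the period-doubling sequence `s j = v₂(j + 1) mod 2`. If `j + 1 < 2 ^ K`,
adding `2 ^ K` does not change `v₂(j + 1)`, so `s` agrees with its shift by `2 ^ K` on a long
initial block, which makes the shifted orbit close to the original one. But
`v₂(2 ^ (K + 1)) = K + 1` and `v₂(2 ^ K) = K` have different parities, so at the position
`2 ^ K - 1` the shift by `2 ^ K` changes the first symbol.
-/

theorem padicValNat_add_pow_of_lt {p a k : ℕ} [hp : Fact p.Prime] (ha : 0 < a) (hak : a < p ^ k) :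
    padicValNat p (a + p ^ k) = padicValNat p a := by
  set v := padicValNat p a
  have hdvd : p ^ v ∣ a := pow_padicValNat_dvd
  have hvk : v < k :=
    (Nat.pow_lt_pow_iff_right hp.out.one_lt).mp ((Nat.le_of_dvd ha hdvd).trans_lt hak)
  rw [← Nat.cast_inj (R := ℕ∞), padicValNat_eq_emultiplicity (by omega)]
  refine emultiplicity_eq_of_dvd_of_not_dvd (dvd_add hdvd (pow_dvd_pow p hvk.le)) ?_
  rw [Nat.dvd_add_left (pow_dvd_pow p hvk)]
  exact pow_succ_padicValNat_not_dvd ha.ne'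

def periodDoubling (j : ℕ) : Fin 2 := (padicValNat 2 (j + 1) : Fin 2)

theorem periodDoubling_add_two_pow {j k : ℕ} (hj : j + 1 < 2 ^ k) :
    periodDoubling (j + 2 ^ k) = periodDoubling j := by
  rw [periodDoubling, periodDoubling, add_right_comm, padicValNat_add_pow_of_lt j.succ_pos hj]

theorem periodDoubling_two_pow_sub_one (k : ℕ) : periodDoubling (2 ^ k - 1) = k := by
  rw [periodDoubling, Nat.sub_add_cancel Nat.one_le_two_pow, padicValNat.prime_pow]

theorem abs_sub_le_one_of_fin_two (a b : Fin 2) : |(a : ℝ) - b| ≤ 1 := by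
  fin_cases a <;> fin_cases b <;> norm_num

theorem abs_sub_eq_one_of_fin_two {a b : Fin 2} (h : a ≠ b) : |(a : ℝ) - b| = 1 := by
  fin_cases a <;> fin_cases b <;> simp_all

theorem dSigma_term_le (s t : ℕ → Fin 2) (k : ℕ) :
    |(s k : ℝ) - t k| / 2 ^ k ≤ 1 / 2 ^ k :=
  div_le_div_of_nonneg_right (abs_sub_le_one_of_fin_two _ _) (by positivity)

theorem summable_dSigma_term (s t : ℕ → Fin 2) :
    Summable fun k => |(s k : ℝ) - t k| / 2 ^ k :=
  (summable_geometric_two' 2).of_nonneg_of_le (fun _ => by positivity) fun k => by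
    simpa using dSigma_term_le s t k

theorem dSigma_le_of_forall_le_eq {s t : ℕ → Fin 2} {m : ℕ} (h : ∀ k ≤ m, s k = t k) :
    dSigma s t ≤ (2 : ℝ)⁻¹ ^ m := by
  have hhead : ∑ k ∈ Finset.range (m + 1), |(s k : ℝ) - t k| / 2 ^ k = 0 :=
    Finset.sum_eq_zero fun k hk => by
      rw [h k (Nat.lt_succ_iff.mp (Finset.mem_range.mp hk))]; simp
  have htail (k : ℕ) : |(s (k + (m + 1)) : ℝ) - t (k + (m + 1))| / 2 ^ (k + (m + 1)) ≤
      (2 : ℝ)⁻¹ ^ m / 2 / 2 ^ k := by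
    refine (dSigma_term_le s t _).trans_eq ?_
    rw [pow_add, pow_succ, inv_pow]; field_simp
  rw [dSigma, ← (summable_dSigma_term s t).sum_add_tsum_nat_add (m + 1), hhead, zero_add]
  exact ((summable_dSigma_term s t).comp_injective (add_left_injective _)).tsum_le_tsum htail
    (summable_geometric_two' _) |>.trans_eq (tsum_geometric_two' _)

theorem one_le_dSigma_of_ne {s t : ℕ → Fin 2} (h : s 0 ≠ t 0) : 1 ≤ dSigma s t := by
  have h0 : |(s 0 : ℝ) - t 0| / 2 ^ 0 = 1 := by rw [abs_sub_eq_one_of_fin_two h]; norm_num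
  exact h0.symm.le.trans <| (summable_dSigma_term s t).le_tsum 0 fun _ _ => by positivity

theorem shift_iterate_apply (a : ℕ) (s : ℕ → Fin 2) (k : ℕ) : shift^[a] s k = s (k + a) := by
  induction a generalizing k with
  | zero => rfl
  | succ a ih => rw [Function.iterate_succ_apply', shift, ih, add_right_comm, add_assoc]

theorem exists_unpredictable_sequence_general (m : ℕ → ℕ) :
    ∃ s : ℕ → Fin 2, ∃ α β : ℕ → ℕ,
      (∀ n, 0 < α n) ∧ (∀ n, 0 < β n) ∧
      Tendsto α atTop atTop ∧ Tendsto β atTop atTop ∧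
      (∀ n, ∀ r ≤ n, dSigma (shift^[α n + r] s) (shift^[r] s) ≤ (2 : ℝ)⁻¹ ^ (m n)) ∧
      (∀ n, 1 ≤ dSigma (shift^[α n + β n] s) (shift^[β n] s)) := by
  set K : ℕ → ℕ := fun n => n + m n + 1
  have hK (n : ℕ) : n + m n + 1 < 2 ^ K n := Nat.lt_two_pow_self
  have hβ (n : ℕ) : n < 2 ^ K n - 1 := by have := hK n; omega
  refine ⟨periodDoubling, fun n => 2 ^ K n, fun n => 2 ^ K n - 1, fun n => by positivity,
    fun n => n.zero_le.trans_lt (hβ n),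
    tendsto_atTop_mono (fun n => (hβ n).le.trans (Nat.sub_le _ _)) tendsto_id,
    tendsto_atTop_mono (fun n => (hβ n).le) tendsto_id, fun n r hr => ?_, fun n => ?_⟩
  · refine dSigma_le_of_forall_le_eq fun k hk => ?_
    rw [shift_iterate_apply, shift_iterate_apply, ← add_assoc, add_right_comm,
      periodDoubling_add_two_pow]
    have := hK n; omega
  · refine one_le_dSigma_of_ne ?_
    have hdouble : 2 ^ K n + (2 ^ K n - 1) = 2 ^ (K n + 1) - 1 := by rw [pow_succ 2 (K n)]; omega
    dsimp only
    rw [shift_iterate_apply, shift_iterate_apply, zero_add, zero_add, hdouble,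
      periodDoubling_two_pow_sub_one, periodDoubling_two_pow_sub_one, Nat.cast_succ]
    exact add_ne_left.mpr one_ne_zero

/-- one-sided version of Lemma 3.1: for each increasing sequence
`{m_n}` of positive integers there are `s** ∈ Σ₂` and sequences `{α_n}, {β_n}` of
positive integers diverging to infinity such that
`d(σ^{α_n+r}(s**), σ^r(s**)) ≤ 2^{-m_n}` for `r = 0,…,n` and
`d(σ^{α_n+β_n}(s**), σ^{β_n}(s**)) ≥ 1` for each `n`. -/
theorem exists_unpredictable_sequence (m : ℕ → ℕ)
    (hmono : StrictMono m) (hpos : ∀ n, 0 < m n) :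
    ∃ s : ℕ → Fin 2, ∃ α β : ℕ → ℕ,
      (∀ n, 0 < α n) ∧ (∀ n, 0 < β n) ∧
      Tendsto α atTop atTop ∧ Tendsto β atTop atTop ∧
      (∀ n, ∀ r ≤ n, dSigma (shift^[α n + r] s) (shift^[r] s) ≤ (2 : ℝ)⁻¹ ^ (m n)) ∧
      (∀ n, 1 ≤ dSigma (shift^[α n + β n] s) (shift^[β n] s)) :=
  exists_unpredictable_sequence_general m
end
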